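/- arXiv:2405.01747 — 5 statements merged into one kernel-verified Lean document; each statement's English description precedes it below -/
import Mathlib

section
/- For integers r ≥ 1 and n ≥ 0, ∑_{p=1}^{r} (-1)^p * C(n + p, p) * C(r - 1, p - 1) = (-1)^r * C(n + 1, r). -/
lemma aux (m : ℕ) : ∀ n k : ℕ,
    ∑ q ∈ Finset.range (m + 1), (-1 : ℤ) ^ q * (m.choose q : ℤ) * ((n + q).choose (q + k) : ℤ)
      = (-1 : ℤ) ^ m * (n.choose (m + k) : ℤ) := by
  induction m with
  | zero => intro n k; simp
  | succ m ih =>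
    intro n k
    rw [Finset.sum_range_succ' _ (m + 1)]
    have hsplit : ∀ q ∈ Finset.range (m + 1),
        (-1 : ℤ) ^ (q + 1) * ((m + 1).choose (q + 1) : ℤ) * ((n + (q + 1)).choose ((q + 1) + k) : ℤ)
        = -((-1 : ℤ) ^ q * (m.choose q : ℤ) * (((n + 1) + q).choose (q + (k + 1)) : ℤ))
          + -((-1 : ℤ) ^ q * (m.choose (q + 1) : ℤ) * ((n + (q + 1)).choose ((q + 1) + k) : ℤ)) := by
      intro q _
      rw [Nat.choose_succ_succ]
      have h1 : n + (q + 1) = (n + 1) + q := by ring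
      have h2 : (q + 1) + k = q + (k + 1) := by ring
      rw [h1, h2]
      push_cast
      ring
    rw [Finset.sum_congr rfl hsplit, Finset.sum_add_distrib, Finset.sum_neg_distrib]
    have hA := ih (n + 1) (k + 1)
    have hU := ih n k
    rw [Finset.sum_range_succ' _ m] at hU
    have hcast : ∀ x, (-((-1 : ℤ) ^ x * (m.choose (x + 1) : ℤ) * ((n + (x + 1)).choose (x + 1 + k) : ℤ)))
        = (-1 : ℤ) ^ (x + 1) * (m.choose (x + 1) : ℤ) * ((n + (x + 1)).choose ((x + 1) + k) : ℤ) := by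
      intro x; ring
    have hS2 : ∑ x ∈ Finset.range (m + 1),
        -((-1 : ℤ) ^ x * (m.choose (x + 1) : ℤ) * ((n + (x + 1)).choose (x + 1 + k) : ℤ))
        = (-1 : ℤ) ^ m * (n.choose (m + k) : ℤ) - (n.choose k : ℤ) := by
      rw [Finset.sum_range_succ]
      rw [Finset.sum_congr rfl (fun x _ => hcast x)]
      simp only [Nat.choose_succ_self, Nat.cast_zero, mul_zero, zero_mul, neg_zero, add_zero]
      simp only [Nat.choose_zero_right, Nat.cast_one, one_mul, Nat.add_zero, Nat.zero_add] at hU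
      linarith [hU]
    rw [hS2, hA]
    have hpascal : ((n + 1).choose (m + (k + 1)) : ℤ)
        = (n.choose (m + k) : ℤ) + (n.choose (m + k + 1) : ℤ) := by
      have h : m + (k + 1) = (m + k) + 1 := by ring
      rw [h, Nat.choose_succ_succ']
      push_cast; ring
    have hidx : m + 1 + k = m + k + 1 := by ring
    rw [hidx, hpascal]
    simp only [Nat.choose_zero_right, Nat.cast_one, Nat.add_zero, Nat.zero_add, pow_zero, one_mul]
    ring

/-- For integers `r ≥ 1` and `n ≥ 0`,
`∑_{p=1}^{r} (-1)^p * C(n + p, p) * C(r - 1, p - 1) = (-1)^r * C(n + 1, r)`. -/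
theorem stmt_1 (n r : ℕ) (hr : 1 ≤ r) :
    ∑ p ∈ Finset.Icc 1 r, (-1 : ℤ) ^ p * ((n + p).choose p : ℤ) * ((r - 1).choose (p - 1) : ℤ) =
      (-1 : ℤ) ^ r * ((n + 1).choose r : ℤ) := by
  obtain ⟨m, rfl⟩ : ∃ m, r = m + 1 := ⟨r - 1, (Nat.succ_pred_eq_of_pos hr).symm⟩
  rw [← Finset.Ico_add_one_right_eq_Icc, Finset.sum_Ico_eq_sum_range]
  have hR : m + 1 + 1 - 1 = m + 1 + 1 - 1 := rfl
  have hc : ∀ i ∈ Finset.range (m + 1 + 1 - 1),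
      (-1 : ℤ) ^ (1 + i) * ((n + (1 + i)).choose (1 + i) : ℤ) * ((m + 1 - 1).choose ((1 + i) - 1) : ℤ)
      = -((-1 : ℤ) ^ i * (m.choose i : ℤ) * (((n + 1) + i).choose (i + 1) : ℤ)) := by
    intro i _
    have h1 : m + 1 - 1 = m := rfl
    have h2 : (1 + i) - 1 = i := by omega
    have h3 : n + (1 + i) = (n + 1) + i := by ring
    have h4 : 1 + i = i + 1 := by ring
    rw [h1, h2, h3, h4]
    ring
  rw [Finset.sum_congr rfl hc]
  have key := aux m (n + 1) 1
  have h5 : m + 1 + 1 - 1 = m + 1 := rfl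
  rw [h5, Finset.sum_neg_distrib, key]
  ring
end

section
/- For positive integers n, r and q ≥ 1, the number of compositions of n into r positive parts in which exactly m parts exceed q equals ∑_{j=m}^{min(r, ⌊(n-r)/q⌋)} (-1)^{m+j} * C(j, m) * C(r, j) * C(n - q*j - 1, r - 1). -/
/-!
Let `E(c)` be the set of parts of `c` that exceed `q`. The binomial moment `∑_c C(|E(c)|, j)`
counts pairs `(c, S)` with `S ⊆ E(c)` and `|S| = j`. For fixed `S`, lowering every part by one and
the parts in `S` by a further `q` is a bijection onto the weak compositions of `n - r - q j`, which
stars and bars counts as `C(n - q j - 1, r - 1)`; so the `j`-th moment is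
`C(r, j) C(n - q j - 1, r - 1)`. The orthogonality relation
`∑_j (-1)^(m+j) C(j, m) C(k, j) = [k = m]` recovers the number of `c` with `|E(c)| = m` from
the moments.
-/

/-- The compositions of `n` into `r` positive parts, as a `Finset` of tuples. -/
def compositions (n r : ℕ) : Finset (Fin r → ℕ) :=
  (Fintype.piFinset fun _ => Finset.range (n + 1)).filter
    fun c => (∀ i, 0 < c i) ∧ ∑ i, c i = n

/-- Integer-valued binomial coefficient with the convention `C(a, b) = 0` when `b < 0`
or `b > a`. -/
def chZ (a b : ℤ) : ℤ := if 0 ≤ b ∧ b ≤ a then (a.toNat.choose b.toNat : ℤ) else 0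

open Finset

theorem card_piAntidiag_univ {ι : Type*} [Fintype ι] [DecidableEq ι] (k : ℕ) :
    #(piAntidiag (univ : Finset ι) k) = (Fintype.card ι + k - 1).choose k := by
  rw [← map_sym_eq_piAntidiag, card_map, sym_univ, card_univ, Sym.card_sym_eq_choose]

-- Stated over `Fin r` rather than a general `Fintype`: the filters below then carry the
-- decidability instance `Nat.decidableForallFin`, which is the one elaborated for `Fin r`.
theorem card_filter_le_piAntidiag_univ {r : ℕ} {f : Fin r → ℕ} {n : ℕ} (h : ∑ i, f i ≤ n) :
    #{c ∈ piAntidiag (univ : Finset (Fin r)) n | ∀ i, f i ≤ c i} =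
      #(piAntidiag (univ : Finset (Fin r)) (n - ∑ i, f i)) := by
  apply card_nbij' (· - f) (· + f)
  · intro c hc
    simp only [mem_coe, mem_filter, mem_piAntidiag, mem_univ, implies_true, and_true] at hc ⊢
    rw [Pi.sub_def, sum_tsub_distrib _ fun i _ => hc.2 i, hc.1]
  · intro d hd
    simp only [mem_coe, mem_filter, mem_piAntidiag, mem_univ, implies_true, and_true] at hd ⊢
    simp [sum_add_distrib, hd, Nat.sub_add_cancel h]
  · intro c hc
    simp only [mem_coe, mem_filter] at hc
    exact tsub_add_cancel_of_le hc.2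
  · exact fun d _ => add_tsub_cancel_right d f

theorem filter_le_piAntidiag_univ_eq_empty {r : ℕ} {f : Fin r → ℕ} {n : ℕ}
    (h : n < ∑ i, f i) : {c ∈ piAntidiag (univ : Finset (Fin r)) n | ∀ i, f i ≤ c i} = ∅ := by
  refine filter_eq_empty_iff.2 fun c hc hfc => h.not_ge ?_
  rw [← (mem_piAntidiag.1 hc).1]
  exact sum_le_sum fun i _ => hfc i

theorem mem_compositions {n r : ℕ} {c : Fin r → ℕ} :
    c ∈ compositions n r ↔ (∀ i, 0 < c i) ∧ ∑ i, c i = n := by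
  refine mem_filter.trans (and_iff_right_iff_imp.2 fun h => Fintype.mem_piFinset.2 fun i => ?_)
  rw [mem_range, Nat.lt_succ_iff, ← h.2]
  exact single_le_sum (fun j _ => Nat.zero_le (c j)) (mem_univ i)

theorem filter_subset_compositions_eq_filter_piAntidiag (n q : ℕ) {r : ℕ} (S : Finset (Fin r)) :
    {c ∈ compositions n r | S ⊆ univ.filter (q < c ·)} =
      {c ∈ piAntidiag (univ : Finset (Fin r)) n | ∀ i, (if i ∈ S then q + 1 else 1) ≤ c i} := by
  ext c
  simp only [mem_filter, mem_compositions, mem_piAntidiag, mem_univ, implies_true, and_true,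
    subset_iff, true_and]
  constructor
  · rintro ⟨⟨hpos, hsum⟩, hS⟩
    refine ⟨hsum, fun i => ?_⟩
    split_ifs with hi
    exacts [hS hi, hpos i]
  · rintro ⟨hsum, hle⟩
    refine ⟨⟨fun i => ?_, hsum⟩, fun i hi => ?_⟩
    · have := hle i
      split_ifs at this <;> omega
    · simpa [hi] using hle i

theorem intCast_card_filter_subset_compositions (n q : ℕ) {r : ℕ} (hr : 0 < r)
    (S : Finset (Fin r)) :
    (#{c ∈ compositions n r | S ⊆ univ.filter (q < c ·)} : ℤ) =
      chZ ((n : ℤ) - q * #S - 1) ((r : ℤ) - 1) := by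
  have hsum : ∑ i, (if i ∈ S then q + 1 else 1) = r + q * #S := by
    have hS : #S + #Sᶜ = r := by rw [card_add_card_compl, Fintype.card_fin]
    rw [sum_ite, filter_mem_eq_inter, univ_inter, filter_notMem_eq_sdiff, ← compl_eq_univ_sdiff]
    simp only [sum_const, smul_eq_mul]
    grind
  rw [filter_subset_compositions_eq_filter_piAntidiag, chZ]
  rcases lt_or_ge n (r + q * #S) with h | h
  · rw [filter_le_piAntidiag_univ_eq_empty (hsum ▸ h), card_empty, if_neg (by omega),
      Nat.cast_zero]
  · rw [card_filter_le_piAntidiag_univ (hsum ▸ h), hsum, card_piAntidiag_univ, Fintype.card_fin,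
      if_pos (by omega)]
    have htop : ((n : ℤ) - q * #S - 1).toNat = r + (n - (r + q * #S)) - 1 := by omega
    have hbot : ((r : ℤ) - 1).toNat = r - 1 := by omega
    rw [htop, hbot, Nat.choose_symm_of_eq_add (b := r - 1) (by omega)]

theorem sum_choose_card_eq_sum_powersetCard {α ι : Type*} [Fintype ι] [DecidableEq ι]
    (s : Finset α) (P : α → Finset ι) (j : ℕ) :
    ∑ x ∈ s, (#(P x)).choose j = ∑ S ∈ powersetCard j univ, #{x ∈ s | S ⊆ P x} := by
  calc ∑ x ∈ s, (#(P x)).choose j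
      = ∑ x ∈ s, #((powersetCard j univ).bipartiteAbove (fun x S => S ⊆ P x) x) := by
        refine sum_congr rfl fun x _ => ?_
        rw [← card_powersetCard, bipartiteAbove]
        congr 1
        ext S
        simp [mem_powersetCard, and_comm]
    _ = _ := sum_card_bipartiteAbove_eq_sum_card_bipartiteBelow _

theorem intCast_sum_choose_card_compositions (n q : ℕ) {r : ℕ} (hr : 0 < r) (j : ℕ) :
    ∑ c ∈ compositions n r, ((#{i | q < c i}).choose j : ℤ) =
      r.choose j * chZ ((n : ℤ) - q * j - 1) ((r : ℤ) - 1) := by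
  rw [← Nat.cast_sum, sum_choose_card_eq_sum_powersetCard, Nat.cast_sum,
    sum_congr rfl fun S hS => by
      rw [intCast_card_filter_subset_compositions n q hr S, (mem_powersetCard.1 hS).2],
    sum_const, card_powersetCard, card_univ, Fintype.card_fin, nsmul_eq_mul]

theorem Int.sum_range_neg_one_pow_mul_choose_mul_choose (m : ℕ) {k r : ℕ} (hkr : k ≤ r) :
    ∑ j ∈ Finset.range (r + 1), (-1 : ℤ) ^ (m + j) * j.choose m * k.choose j =
      if k = m then 1 else 0 := by
  have hzero : ∀ j, (j < m ∨ k < j) → (-1 : ℤ) ^ (m + j) * j.choose m * k.choose j = 0 := by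
    rintro j (hj | hj) <;> simp [Nat.choose_eq_zero_of_lt hj]
  rcases lt_or_ge k m with hkm | hmk
  · rw [if_neg hkm.ne]
    exact Finset.sum_eq_zero fun j _ => hzero j (by omega)
  calc ∑ j ∈ Finset.range (r + 1), (-1 : ℤ) ^ (m + j) * j.choose m * k.choose j
      = ∑ j ∈ Finset.Ico m (k + 1), (-1 : ℤ) ^ (m + j) * j.choose m * k.choose j := by
        refine (Finset.sum_subset (fun j hj => ?_) fun j hj hj' => hzero j ?_).symm
        · simp only [Finset.mem_Ico, Finset.mem_range] at hj ⊢
          omega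
        · simp only [Finset.mem_Ico, not_and, not_lt] at hj'
          omega
    _ = ∑ i ∈ Finset.range (k - m + 1), k.choose m * ((-1 : ℤ) ^ i * (k - m).choose i) := by
        rw [Finset.sum_Ico_eq_sum_range, show k + 1 - m = k - m + 1 by omega]
        refine Finset.sum_congr rfl fun i _ => ?_
        have hchoose := Nat.choose_mul (n := k) (Nat.le_add_right m i)
        rw [Nat.add_sub_cancel_left] at hchoose
        have hsign : (-1 : ℤ) ^ (m + (m + i)) = (-1) ^ i := by
          rw [← add_assoc, ← two_mul, pow_add, pow_mul, neg_one_sq, one_pow, one_mul]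
        rw [hsign, mul_assoc, ← Nat.cast_mul, mul_comm (Nat.choose _ _), hchoose]
        push_cast
        ring
    _ = if k = m then 1 else 0 := by
        rw [← Finset.mul_sum, Int.alternating_sum_range_choose]
        rcases hmk.eq_or_lt with rfl | hlt
        · simp
        · simp [hlt.ne', Nat.sub_ne_zero_of_lt hlt]

theorem intCast_card_filter_eq_sum_neg_one_pow {α : Type*} (s : Finset α) (e : α → ℕ) {r : ℕ}
    (he : ∀ x ∈ s, e x ≤ r) (m : ℕ) :
    (#{x ∈ s | e x = m} : ℤ) =
      ∑ j ∈ range (r + 1), (-1 : ℤ) ^ (m + j) * j.choose m * ∑ x ∈ s, ((e x).choose j : ℤ) := by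
  simp_rw [mul_sum]
  rw [sum_comm, card_filter, Nat.cast_sum]
  refine sum_congr rfl fun x hx => ?_
  rw [Int.sum_range_neg_one_pow_mul_choose_mul_choose m (he x hx), Nat.cast_ite, Nat.cast_one,
    Nat.cast_zero]

theorem chZ_eq_zero_of_lt {a b : ℤ} (h : a < b) : chZ a b = 0 :=
  if_neg fun h' => (h.trans_le h'.2).false

theorem stmt_4_general (n r q m : ℕ) (hr : 1 ≤ r) (hq : 1 ≤ q) :
    (((compositions n r).filter
          fun c => (Finset.univ.filter fun i => q < c i).card = m).card : ℤ) =
      ∑ j ∈ Finset.Icc m (min r ((n - r) / q)),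
        (-1 : ℤ) ^ (m + j) * (j.choose m : ℤ) * (r.choose j : ℤ) *
          chZ ((n : ℤ) - q * j - 1) ((r : ℤ) - 1) := by
  rw [intCast_card_filter_eq_sum_neg_one_pow _ _
    (fun c _ => (card_filter_le _ _).trans_eq (card_fin r))]
  simp_rw [intCast_sum_choose_card_compositions n q hr, ← mul_assoc]
  refine (sum_subset (fun j hj => ?_) fun j hj hj' => ?_).symm
  · simp only [mem_Icc, mem_range] at hj ⊢
    omega
  rcases lt_or_ge j m with hjm | hmj
  · simp [Nat.choose_eq_zero_of_lt hjm]
  have hj : (n - r) / q < j := by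
    simp only [mem_Icc, mem_range, not_and, not_le] at hj hj'
    omega
  rw [Nat.div_lt_iff_lt_mul hq, mul_comm] at hj
  rw [chZ_eq_zero_of_lt (by omega), mul_zero]

/-- For positive integers `n, r` and `q ≥ 1`, the number of compositions of `n` into `r`
positive parts in which exactly `m` parts exceed `q` equals
`∑_{j=m}^{min(r, ⌊(n-r)/q⌋)} (-1)^{m+j} * C(j, m) * C(r, j) * C(n - q*j - 1, r - 1)`. -/
theorem stmt_4 (n r q m : ℕ) (hn : 1 ≤ n) (hr : 1 ≤ r) (hq : 1 ≤ q) :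
    (((compositions n r).filter
          fun c => (Finset.univ.filter fun i => q < c i).card = m).card : ℤ) =
      ∑ j ∈ Finset.Icc m (min r ((n - r) / q)),
        (-1 : ℤ) ^ (m + j) * (j.choose m : ℤ) * (r.choose j : ℤ) *
          chZ ((n : ℤ) - q * j - 1) ((r : ℤ) - 1) :=
  stmt_4_general n r q m hr hq
end

section
/- For positive integers n, r and q ≥ 1, the number of compositions of n into r positive parts in which at most m parts exceed q equals ∑_{j=0}^{min(r, ⌊(n-r)/q⌋)} (-1)^{m+j} * C(j - 1, m) * C(r, j) * C(n - q*j - 1, r - 1), where C(-1, m) is interpreted as the j = 0 term contributing C(n-1, r-1) when m ≥ 0 (i.e., C(j-1,m) with j=0 taken as (-1)^m). -/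
open Finset

section WeakCompositions

variable {ι : Type*} [Fintype ι] [DecidableEq ι]

theorem card_piAntidiag_univ_nat (N : ℕ) :
    #(piAntidiag (univ : Finset ι) N) = (Fintype.card ι + N - 1).choose N := by
  rw [← Sym.card_sym_eq_choose, ← Fintype.card_coe]
  refine Fintype.card_congr ((Equiv.subtypeEquivRight fun c => ?_).trans
    (Sym.equivNatSumOfFintype ι N).symm)
  simp

theorem card_filter_le_piAntidiag_univ_of_sum_le (b : ι → ℕ)
    [DecidablePred fun c : ι → ℕ => ∀ i, b i ≤ c i] {N : ℕ} (hb : ∑ i, b i ≤ N) :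
    #((piAntidiag univ N).filter fun c : ι → ℕ => ∀ i, b i ≤ c i) =
      #(piAntidiag (univ : Finset ι) (N - ∑ i, b i)) := by
  refine card_nbij' (· - b) (· + b) ?_ ?_ ?_ ?_
  · intro c hc
    simp only [coe_filter, mem_piAntidiag, mem_univ, implies_true, and_true,
      Set.mem_ofPred_eq, mem_coe] at hc ⊢
    rw [← hc.1, ← sum_tsub_distrib _ fun i _ => hc.2 i]
    rfl
  · intro d hd
    simp only [coe_filter, mem_piAntidiag, mem_univ, implies_true, and_true,
      Set.mem_ofPred_eq, mem_coe] at hd ⊢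
    refine ⟨?_, fun i => Nat.le_add_left _ _⟩
    simp only [Pi.add_apply, sum_add_distrib, hd]
    omega
  · intro c hc
    simp only [coe_filter, Set.mem_ofPred_eq] at hc
    ext i
    simp [Nat.sub_add_cancel (hc.2 i)]
  · intro d _
    ext i
    simp

theorem filter_le_piAntidiag_univ_eq_empty_s6 (b : ι → ℕ)
    [DecidablePred fun c : ι → ℕ => ∀ i, b i ≤ c i] {N : ℕ} (hb : N < ∑ i, b i) :
    (piAntidiag univ N).filter (fun c : ι → ℕ => ∀ i, b i ≤ c i) = ∅ := by
  refine filter_eq_empty_iff.mpr fun c hc hbc => hb.not_ge ?_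
  rw [← (mem_piAntidiag.mp hc).1]
  exact sum_le_sum fun i _ => hbc i

end WeakCompositions

theorem chZ_natCast (a b : ℕ) : chZ a b = a.choose b := by
  unfold chZ
  split_ifs with h
  · simp
  · rw [Nat.choose_eq_zero_of_lt (by omega), Nat.cast_zero]

theorem chZ_sub_mul_eq_zero_of_div_lt {n r q j : ℕ} (hq : 1 ≤ q) (hj : (n - r) / q < j) :
    chZ ((n : ℤ) - q * j - 1) ((r : ℤ) - 1) = 0 := by
  have hqj : n - r < j * q := (Nat.div_lt_iff_lt_mul hq).mp hj
  have hn : (n : ℤ) < r + j * q := by exact_mod_cast (by omega : n < r + j * q)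
  exact chZ_eq_zero_of_lt (by linarith)

theorem compositions_eq_filter_piAntidiag (n r : ℕ) :
    compositions n r = {c ∈ piAntidiag (univ : Finset (Fin r)) n | ∀ i, 1 ≤ c i} := by
  ext c
  simp only [compositions, mem_filter, Fintype.mem_piFinset, mem_range, mem_piAntidiag,
    mem_univ, implies_true, and_true, Nat.one_le_iff_ne_zero, Nat.pos_iff_ne_zero]
  constructor
  · exact fun h => ⟨h.2.2, h.2.1⟩
  · rintro ⟨hsum, hpos⟩
    refine ⟨fun i => Nat.lt_succ_of_le ?_, hpos, hsum⟩
    exact hsum ▸ single_le_sum (by simp) (mem_univ i)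

theorem card_filter_compositions_subset (n q : ℕ) {r : ℕ} (hr : 1 ≤ r) (T : Finset (Fin r)) :
    (#{c ∈ compositions n r | T ⊆ ({i | q < c i} : Finset (Fin r))} : ℤ) =
      chZ (n - q * #T - 1) (r - 1) := by
  set b : Fin r → ℕ := fun i => 1 + if i ∈ T then q else 0
  have hfilter : {c ∈ compositions n r | T ⊆ ({i | q < c i} : Finset (Fin r))} =
      {c ∈ piAntidiag (univ : Finset (Fin r)) n | ∀ i, b i ≤ c i} := by
    rw [compositions_eq_filter_piAntidiag, filter_filter]
    refine filter_congr fun c _ => ?_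
    simp only [subset_iff, mem_filter, mem_univ, true_and, b]
    grind
  have hb : ∑ i, b i = r + q * #T := by
    simp [b, sum_add_distrib, sum_ite_mem, mul_comm]
  rw [hfilter]
  rcases le_or_gt (r + q * #T) n with hle | hlt
  · rw [card_filter_le_piAntidiag_univ_of_sum_le b (by omega), card_piAntidiag_univ_nat,
      Fintype.card_fin, hb, show r + (n - (r + q * #T)) - 1 = n - q * #T - 1 by omega,
      ← Nat.choose_symm_of_eq_add (show n - q * #T - 1 = (r - 1) + (n - (r + q * #T)) by omega),
      ← chZ_natCast]
    congr 1 <;> omega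
  · rw [filter_le_piAntidiag_univ_eq_empty_s6 b (by omega), card_empty, Nat.cast_zero,
      chZ_eq_zero_of_lt (by omega)]

theorem Int.alternating_sum_range_choose_mul_choose (k m : ℕ) :
    ∑ i ∈ Finset.range (k + 1), (-1 : ℤ) ^ i * k.choose i * i.choose m =
      if k = m then (-1) ^ m else 0 := by
  rcases lt_or_ge k m with hkm | hmk
  · rw [if_neg hkm.ne]
    refine sum_eq_zero fun i hi => ?_
    rw [Nat.choose_eq_zero_of_lt (n := i) (by grind), Nat.cast_zero, mul_zero]
  obtain ⟨l, rfl⟩ := Nat.exists_eq_add_of_le hmk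
  have hlow : ∑ i ∈ Finset.range m, (-1 : ℤ) ^ i * (m + l).choose i * i.choose m = 0 :=
    sum_eq_zero fun i hi => by
      rw [Nat.choose_eq_zero_of_lt (mem_range.mp hi), Nat.cast_zero, mul_zero]
  have hhigh (x : ℕ) : (-1 : ℤ) ^ (m + x) * (m + l).choose (m + x) * (m + x).choose m =
      (-1) ^ m * (m + l).choose m * ((-1) ^ x * l.choose x) := by
    have := Nat.choose_mul (n := m + l) (Nat.le_add_right m x)
    rw [Nat.add_sub_cancel_left, Nat.add_sub_cancel_left] at this
    have hZ : ((m + l).choose (m + x) : ℤ) * (m + x).choose m =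
        (m + l).choose m * l.choose x := by
      exact_mod_cast this
    rw [pow_add]
    linear_combination ((-1 : ℤ) ^ m * (-1) ^ x) * hZ
  rw [add_assoc, sum_range_add, hlow, zero_add]
  simp only [hhigh, ← mul_sum, Int.alternating_sum_range_choose, Nat.add_eq_left]
  split_ifs with hl
  · simp [hl]
  · rw [mul_zero]

def atMostCoeff (m j : ℕ) : ℤ :=
  (-1) ^ (m + j) * if j = 0 then (-1) ^ m else ((j - 1).choose m : ℤ)

theorem atMostCoeff_zero (m : ℕ) : atMostCoeff m 0 = 1 := by
  simp [atMostCoeff, ← pow_add, ← two_mul]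

theorem atMostCoeff_succ (m j : ℕ) :
    atMostCoeff m (j + 1) = -(-1) ^ m * ((-1) ^ j * j.choose m) := by
  simp only [atMostCoeff, Nat.add_one_ne_zero, if_false, Nat.add_sub_cancel]
  ring

theorem sum_range_choose_nsmul_atMostCoeff (m k : ℕ) :
    ∑ j ∈ range (k + 1), k.choose j • atMostCoeff m j = if k ≤ m then 1 else 0 := by
  induction k with
  | zero => simp [atMostCoeff_zero]
  | succ k ih =>
    rw [sum_choose_succ_nsmul (fun j _ => atMostCoeff m j), ih]
    have hshift : ∑ i ∈ range (k + 1), k.choose i • atMostCoeff m (i + 1) =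
        -(-1) ^ m * ∑ i ∈ range (k + 1), (-1 : ℤ) ^ i * k.choose i * i.choose m := by
      rw [mul_sum]
      refine sum_congr rfl fun i _ => ?_
      rw [nsmul_eq_mul, atMostCoeff_succ]
      ring
    rw [hshift, Int.alternating_sum_range_choose_mul_choose]
    rcases lt_trichotomy k m with h | rfl | h
    · simp [h.le, h.ne, Nat.succ_le_of_lt h]
    · simp [← pow_add, ← two_mul]
    · simp [h.not_ge, h.ne', show ¬k + 1 ≤ m by omega]

theorem sum_powerset_atMostCoeff {α : Type*} (m : ℕ) (E : Finset α) :
    ∑ T ∈ E.powerset, atMostCoeff m #T = if #E ≤ m then 1 else 0 := by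
  rw [sum_powerset_apply_card, sum_range_choose_nsmul_atMostCoeff]

theorem card_filter_card_le_eq_sum {β ι : Type*} [Fintype ι] [DecidableEq ι]
    (s : Finset β) (E : β → Finset ι) (m : ℕ) :
    (#{x ∈ s | #(E x) ≤ m} : ℤ) =
      ∑ T : Finset ι, atMostCoeff m #T * #{x ∈ s | T ⊆ E x} := by
  calc (#{x ∈ s | #(E x) ≤ m} : ℤ)
      = ∑ x ∈ s, ∑ T ∈ (E x).powerset, atMostCoeff m #T := by
        simp only [sum_powerset_atMostCoeff, sum_boole]
    _ = ∑ x ∈ s, ∑ T : Finset ι, if T ⊆ E x then atMostCoeff m #T else 0 := by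
        refine sum_congr rfl fun x _ => ?_
        rw [← sum_filter]
        exact sum_congr (by ext T; simp) fun _ _ => rfl
    _ = ∑ T : Finset ι, atMostCoeff m #T * #{x ∈ s | T ⊆ E x} := by
        rw [sum_comm]
        simp only [← sum_filter, sum_const, nsmul_eq_mul, mul_comm]

theorem card_filter_compositions_card_le_eq_sum_range (n q m : ℕ) {r : ℕ} (hr : 1 ≤ r) :
    (#{c ∈ compositions n r | #({i | q < c i} : Finset (Fin r)) ≤ m} : ℤ) =
      ∑ j ∈ range (r + 1), atMostCoeff m j * r.choose j * chZ (n - q * j - 1) (r - 1) := by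
  rw [card_filter_card_le_eq_sum]
  simp only [card_filter_compositions_subset n q hr]
  rw [← powerset_univ,
    sum_powerset_apply_card fun j => atMostCoeff m j * chZ (n - q * j - 1) (r - 1),
    card_univ, Fintype.card_fin]
  refine sum_congr rfl fun j _ => ?_
  rw [nsmul_eq_mul]
  ring

theorem stmt_6_general (n r q m : ℕ) (hr : 1 ≤ r) (hq : 1 ≤ q) :
    (((compositions n r).filter
          fun c => (Finset.univ.filter fun i => q < c i).card ≤ m).card : ℤ) =
      ∑ j ∈ Finset.range (min r ((n - r) / q) + 1),
        (-1 : ℤ) ^ (m + j) *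
          (if j = 0 then (-1 : ℤ) ^ m else (((j - 1).choose m : ℕ) : ℤ)) *
          (r.choose j : ℤ) * chZ ((n : ℤ) - q * j - 1) ((r : ℤ) - 1) := by
  rw [card_filter_compositions_card_le_eq_sum_range n q m hr]
  refine (sum_subset (range_subset_range.mpr (by omega)) fun j hj hj' => ?_).symm
  rw [mem_range] at hj hj'
  rw [chZ_sub_mul_eq_zero_of_div_lt hq (by omega), mul_zero]

/-- For positive integers `n, r` and `q ≥ 1`, the number of compositions of `n` into `r`
positive parts in which at most `m` parts exceed `q` equals
`∑_{j=0}^{min(r, ⌊(n-r)/q⌋)} (-1)^{m+j} * C(j - 1, m) * C(r, j) * C(n - q*j - 1, r - 1)`,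
where the `j = 0` term is interpreted via the convention
`(-1)^j * C(j-1, m) |_{j=0} = (-1)^m`, i.e. the `j = 0` term contributes `C(n-1, r-1)`. -/
theorem stmt_6 (n r q m : ℕ) (hn : 1 ≤ n) (hr : 1 ≤ r) (hq : 1 ≤ q) :
    (((compositions n r).filter
          fun c => (Finset.univ.filter fun i => q < c i).card ≤ m).card : ℤ) =
      ∑ j ∈ Finset.range (min r ((n - r) / q) + 1),
        (-1 : ℤ) ^ (m + j) *
          (if j = 0 then (-1 : ℤ) ^ m else (((j - 1).choose m : ℕ) : ℤ)) *
          (r.choose j : ℤ) * chZ ((n : ℤ) - q * j - 1) ((r : ℤ) - 1) :=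
  stmt_6_general n r q m hr hq
end

section
/- Let g(x, y) = (x + x^2 + ... + x^q) + y*(x^{q+1} + x^{q+2} + ...) as a formal power series in x and y, with q ≥ 1. Then the coefficient of x^n y^m in g(x, y)^r equals ∑_{j} (-1)^{j - m} * C(j, m) * C(r, j) * C(n - q*j - 1, r - 1). -/
/-!
Since `g = x (1 - (1 - y) x^q) / (1 - x)`, we have
`g^r = ∑_j (-1)^j C(r, j) (1 - y)^j x^{r + q j} (1 - x)^{-r}`, and `(1 - x)^{-r}` has
coefficients `C(k + r - 1, r - 1)`. Reading series in `x, y` as series in `x` over `ℤ⟦y⟧`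
(`MvPowerSeries.finSuccEquiv`), the `x^n`-coefficient is a combination of the `(1 - y)^j`,
and the `y^m`-coefficient of `(1 - y)^j` is `(-1)^m C(j, m)`.
-/

open MvPowerSeries

/-- The generating function `g(x, y) = x(1 - x^q)/(1 - x) + y x^{q+1}/(1 - x)` as a
formal power series over `ℤ` in the two variables `x = X 0` and `y = X 1`. -/
noncomputable def g (q : ℕ) : MvPowerSeries (Fin 2) ℤ :=
  X 0 * (1 - (X 0) ^ q) * invOfUnit (1 - X 0) 1 +
    X 1 * (X 0) ^ (q + 1) * invOfUnit (1 - X 0) 1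

open Finset

theorem one_sub_pow_eq_sum_zsmul {R : Type*} [CommRing R] (a : R) (n : ℕ) :
    (1 - a) ^ n = ∑ i ∈ range (n + 1), ((-1) ^ i * n.choose i : ℤ) • a ^ i := by
  rw [← neg_add_eq_sub, add_pow]
  refine sum_congr rfl fun i _ => ?_
  rw [one_pow, mul_one, neg_pow, zsmul_eq_mul]
  push_cast
  ring

theorem MvPowerSeries.coeff_single_one_sub_X_pow {σ R : Type*} [CommRing R] (s : σ) (j m : ℕ) :
    coeff (Finsupp.single s m) ((1 - X s : MvPowerSeries σ R) ^ j) = (-1) ^ m * j.choose m := by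
  classical
  simp_rw [one_sub_pow_eq_sum_zsmul, map_sum, map_zsmul, coeff_X_pow,
    (Finsupp.single_injective s).eq_iff, smul_ite, smul_zero, sum_ite_eq, mem_range]
  split_ifs with hm
  · simp
  · simp [Nat.choose_eq_zero_of_lt (by omega : j < m)]

theorem PowerSeries.coeff_X_mul_one_sub_C_mul_X_pow_pow_mul_invOneSubPow {S : Type*} [CommRing S]
    (y : S) (q r n : ℕ) (hr : 0 < r) :
    coeff n ((X * (1 - C y * X ^ q)) ^ r * (invOneSubPow S r).val) =
      ∑ j ∈ range (r + 1), ((-1) ^ j * r.choose j *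
        if r + q * j ≤ n then ((r - 1 + (n - (r + q * j))).choose (r - 1) : ℤ) else 0) •
          y ^ j := by
  rw [mul_pow, one_sub_pow_eq_sum_zsmul, mul_sum, sum_mul, map_sum]
  refine sum_congr rfl fun j _ => ?_
  have hterm : X ^ r * (((-1) ^ j * r.choose j : ℤ) • (C y * X ^ q) ^ j) *
      (invOneSubPow S r).val =
      ((-1) ^ j * r.choose j : ℤ) •
        (C (y ^ j) * (X ^ (r + q * j) * (invOneSubPow S r).val)) := by
    rw [mul_pow, map_pow, pow_add, pow_mul, mul_smul_comm, smul_mul_assoc]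
    ring_nf
  rw [hterm, map_zsmul, coeff_C_mul, coeff_X_pow_mul',
    invOneSubPow_val_eq_mk_sub_one_add_choose_of_pos _ _ hr, coeff_mk]
  split_ifs <;> simp [mul_smul, mul_comm]

theorem chZ_sub_sub_one_eq_ite (n a r : ℕ) (hr : 0 < r) :
    chZ ((n : ℤ) - a - 1) ((r : ℤ) - 1) =
      if r + a ≤ n then ((r - 1 + (n - (r + a))).choose (r - 1) : ℤ) else 0 := by
  unfold chZ
  by_cases h : r + a ≤ n
  · rw [if_pos (by omega), if_pos h]
    congr 2 <;> omega
  · rw [if_neg (by omega), if_neg h]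

theorem MvPowerSeries.finSuccEquiv_invOfUnit_one_sub_X_zero {R : Type*} [CommRing R] (n : ℕ) :
    finSuccEquiv R n (invOfUnit (1 - X 0) 1) = (PowerSeries.invOneSubPow _ 1).val := by
  refine (left_inv_eq_right_inv (a := 1 - PowerSeries.X) ?_ ?_).symm
  · have h := (PowerSeries.invOneSubPow (MvPowerSeries (Fin n) R) 1).val_inv
    rwa [PowerSeries.invOneSubPow_inv_eq_one_sub_pow, pow_one] at h
  · have h := congrArg (finSuccEquiv R n)
      (mul_invOfUnit (1 - X 0 : MvPowerSeries (Fin (n + 1)) R) 1 (by simp))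
    rwa [map_mul, map_sub, map_one, finSuccEquiv_X_zero] at h

theorem finSuccEquiv_g_pow (q r : ℕ) :
    finSuccEquiv ℤ 1 (g q ^ r) =
      (PowerSeries.X * (1 - PowerSeries.C (1 - X 0) * PowerSeries.X ^ q)) ^ r *
        (PowerSeries.invOneSubPow _ r).val := by
  have hg : g q = X 0 * (1 - (1 - X 1) * X 0 ^ q) * invOfUnit (1 - X 0) 1 := by
    unfold g
    ring
  have hpow : PowerSeries.invOneSubPow (MvPowerSeries (Fin 1) ℤ) 1 ^ r =
      PowerSeries.invOneSubPow _ r := by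
    simp_rw [PowerSeries.invOneSubPow_eq_inv_one_sub_pow, pow_one]
  have hX1 : finSuccEquiv ℤ 1 (X 1) = PowerSeries.C (X 0) := finSuccEquiv_X_succ 0
  rw [hg, mul_pow, map_mul, map_pow, map_pow, finSuccEquiv_invOfUnit_one_sub_X_zero,
    ← Units.val_pow_eq_pow_val, hpow]
  simp only [map_mul, map_sub, map_one, map_pow, finSuccEquiv_X_zero, hX1]

theorem stmt_8_general (q r n m : ℕ) (hr : 1 ≤ r) :
    MvPowerSeries.coeff (R := ℤ) (Finsupp.single 0 n + Finsupp.single 1 m) ((g q) ^ r) =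
      ∑ j ∈ Finset.range (r + 1),
        (-1 : ℤ) ^ (m + j) * (j.choose m : ℤ) * (r.choose j : ℤ) *
          chZ ((n : ℤ) - q * j - 1) ((r : ℤ) - 1) := by
  have hidx : Finsupp.single 0 n + Finsupp.single 1 m =
      Finsupp.cons n (Finsupp.single (0 : Fin 1) m) := by
    ext i
    fin_cases i
    · simp
    · simpa using (Finsupp.cons_succ (0 : Fin 1) n (Finsupp.single 0 m)).symm
  rw [hidx, ← coeff_coeff_finSuccEquiv, finSuccEquiv_g_pow,
    PowerSeries.coeff_X_mul_one_sub_C_mul_X_pow_pow_mul_invOneSubPow _ _ _ _ hr, map_sum]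
  refine sum_congr rfl fun j _ => ?_
  rw [map_zsmul, coeff_single_one_sub_X_pow, ← Nat.cast_mul, chZ_sub_sub_one_eq_ite _ _ _ hr,
    smul_eq_mul]
  ring

/-- For `q ≥ 1` and `r ≥ 1`, the coefficient of `x^n y^m` in `g(x, y)^r` equals
`∑_j (-1)^{j - m} C(j, m) C(r, j) C(n - q*j - 1, r - 1)`, the sum ranging over all `j`
for which the summand is nonzero (hence `0 ≤ j ≤ r` suffices). -/
theorem stmt_8 (q r n m : ℕ) (hq : 1 ≤ q) (hr : 1 ≤ r) :
    MvPowerSeries.coeff (R := ℤ) (Finsupp.single 0 n + Finsupp.single 1 m) ((g q) ^ r) =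
      ∑ j ∈ Finset.range (r + 1),
        (-1 : ℤ) ^ (m + j) * (j.choose m : ℤ) * (r.choose j : ℤ) *
          chZ ((n : ℤ) - q * j - 1) ((r : ℤ) - 1) :=
  stmt_8_general q r n m hr
end

section
/- For a k-letter sequence with n_i elements of letter i (n = ∑ n_i), the number of arrangements of the multiset is ∑_{r_1=1}^{n_1} ... ∑_{r_k=1}^{n_k} F(r_1, ..., r_k) * ∏_{i=1}^k C(n_i - 1, r_i - 1) = n!/(n_1! ... n_k!). -/
/-- `F r` is the number of words over `{0, …, k-1}` with exactly `r i` occurrences of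
letter `i` and no two adjacent letters equal (valid block interleavings). -/
def F {k : ℕ} (r : Fin k → ℕ) : ℕ :=
  Fintype.card {w : List.Vector (Fin k) (∑ i, r i) //
    (∀ i, w.toList.count i = r i) ∧ w.toList.IsChain (· ≠ ·)}

/-!
Cutting a word into its maximal runs of equal letters gives a bijection between the words with
`n i` letters `i` and `r i` runs of letter `i`, and the pairs consisting of a word with `r i`
letters `i` and no two equal adjacent letters (the letters of the runs) together with, for each
`i`, a composition of `n i` into `r i` parts (the lengths of the runs of `i`, left to right).
There are `C(n i - 1, r i - 1)` such compositions, one for each choice of `r i - 1` cut points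
among the `n i - 1` gaps, and summing over `r` counts all `n! / ∏ n_i!` words.
-/

open Finset
open scoped Nat

theorem CompositionAsSet.length_compositionAsSetEquiv_symm {m : ℕ} (s : Finset (Fin m)) :
    ((compositionAsSetEquiv (m + 1)).symm s).length = #s + 1 := by
  have hb : ((compositionAsSetEquiv (m + 1)).symm s).boundaries =
      insert 0 (insert (Fin.last (m + 1)) (s.map (Fin.castSuccEmb.trans (Fin.succEmb _)))) := by
    ext i
    simp only [compositionAsSetEquiv, Equiv.coe_fn_symm_mk, Set.mem_toFinset, Set.mem_ofPred_eq,
      mem_insert, mem_map, Function.Embedding.trans_apply, Fin.coe_castSuccEmb, Fin.coe_succEmb,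
      exists_prop]
    simp only [Fin.ext_iff (a := Fin.succ _), Fin.val_succ, Fin.val_castSucc, eq_comm (a := i.val)]
    rfl
  rw [CompositionAsSet.length, hb, card_insert_of_notMem, card_insert_of_notMem, card_map]
  · simp
  · simpa [Fin.ext_iff] using fun x _ => x.isLt.ne
  · simp [Fin.ext_iff]

theorem Composition.card_length_eq {n r : ℕ} (hn : 0 < n) (hr : 0 < r) :
    Nat.card {c : Composition n // c.length = r} = (n - 1).choose (r - 1) := by
  obtain ⟨m, rfl⟩ : ∃ m, n = m + 1 := ⟨n - 1, by omega⟩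
  obtain ⟨j, rfl⟩ : ∃ j, r = j + 1 := ⟨r - 1, by omega⟩
  have hsets : Nat.card {s : Finset (Fin m) // #s = j} = m.choose j := by
    simp [Nat.card_eq_fintype_card, Fintype.card_finset_len]
  rw [Nat.add_sub_cancel, Nat.add_sub_cancel, ← hsets]
  refine Nat.card_congr
    (((compositionEquiv (m + 1)).trans (compositionAsSetEquiv (m + 1))).subtypeEquiv fun c => ?_)
  have h := CompositionAsSet.length_compositionAsSetEquiv_symm (m := m)
    (compositionAsSetEquiv (m + 1) c.toCompositionAsSet)
  rw [Equiv.symm_apply_apply, Composition.toCompositionAsSet_length] at h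
  simp [compositionEquiv, h]

namespace List

variable {α : Type*}

def subtypeEquivSigmaCons {P : List α → Prop} (hP : ¬ P []) :
    {l // P l} ≃ Σ a, {l // P (a :: l)} where
  toFun
    | ⟨a :: l, h⟩ => ⟨a, l, h⟩
    | ⟨[], h⟩ => (hP h).elim
  invFun x := ⟨x.1 :: x.2.1, x.2.2⟩
  left_inv := by rintro ⟨_ | ⟨a, l⟩, h⟩; exacts [(hP h).elim, rfl]
  right_inv _ := rfl

section

variable [DecidableEq α]

theorem sum_count_eq_length [Fintype α] (l : List α) : ∑ a, l.count a = l.length := by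
  simpa using Multiset.sum_count_eq_card (s := univ) (m := (l : Multiset α)) fun _ _ => mem_univ _

theorem length_eq_sum_of_count_eq [Fintype α] {l : List α} {n : α → ℕ}
    (h : ∀ a, l.count a = n a) : l.length = ∑ a, n a :=
  (sum_count_eq_length l).symm.trans (Finset.sum_congr rfl fun a _ => h a)

instance finite_count_eq [Fintype α] (n : α → ℕ) :
    Finite {l : List α // ∀ a, l.count a = n a} :=
  Finite.of_injective (β := List.Vector α (∑ a, n a))
    (fun l => ⟨l.1, length_eq_sum_of_count_eq l.2⟩)
    fun _ _ h => Subtype.ext (congrArg List.Vector.toList h)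

theorem card_cons_count_eq {a : α} {n : α → ℕ} {m : ℕ} (hna : n a = m + 1) :
    Nat.card {l // ∀ b, (a :: l).count b = n b} =
      Nat.card {l : List α // ∀ b, l.count b = Function.update n a m b} :=
  Nat.card_congr <| Equiv.subtypeEquivRight fun l => forall_congr' fun b => by
    by_cases hb : b = a
    · subst hb; simp [hna]
    · simp [hb, Ne.symm hb]

theorem card_count_eq_mul_prod_factorial [Fintype α] (n : α → ℕ) :
    Nat.card {l : List α // ∀ a, l.count a = n a} * ∏ a, (n a)! = (∑ a, n a)! := by
  generalize hN : ∑ a, n a = N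
  induction N generalizing n with
  | zero =>
    obtain rfl : n = 0 := funext fun a => (Finset.sum_eq_zero_iff.mp hN) a (mem_univ a)
    have : Unique {l : List α // ∀ a, l.count a = 0} :=
      ⟨⟨⟨[], fun _ => rfl⟩⟩, fun l => Subtype.ext (eq_nil_iff_forall_not_mem.mpr
        fun a ha => (count_pos_iff.mpr ha).ne' (l.2 a))⟩
    simp
  | succ N ih =>
    have hnil : ¬ ∀ a, ([] : List α).count a = n a := fun h => by simp [← h] at hN
    have hcons a : Nat.card {l // ∀ b, (a :: l).count b = n b} * ∏ b, (n b)! = n a * N ! := by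
      rcases hna : n a with _ | m
      · have : IsEmpty {l // ∀ b, (a :: l).count b = n b} :=
          ⟨fun l => by simpa [hna] using l.2 a⟩
        simp
      let n' := Function.update n a m
      have hn'a : n' a = m := Function.update_self a m n
      have hn'b b (hb : b ∈ univ.erase a) : n' b = n b :=
        Function.update_of_ne (ne_of_mem_erase hb) m n
      have hsum : ∑ b, n' b = N := by
        rw [← Finset.add_sum_erase _ _ (mem_univ a), hna] at hN
        rw [← Finset.add_sum_erase _ _ (mem_univ a), hn'a, Finset.sum_congr rfl hn'b]
        change m + ∑ b ∈ univ.erase a, n b = N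
        omega
      have hprod : ∏ b, (n b)! = (m + 1) * ∏ b, (n' b)! := by
        rw [← Finset.mul_prod_erase _ _ (mem_univ a), ← Finset.mul_prod_erase _ _ (mem_univ a),
          hna, hn'a, Nat.factorial_succ, mul_assoc,
          Finset.prod_congr rfl fun b hb => congrArg (·!) (hn'b b hb).symm]
      rw [card_cons_count_eq hna, hprod, mul_left_comm, ih n' hsum]
    have (a : α) : Finite {l // ∀ b, (a :: l).count b = n b} :=
      Finite.of_injective (fun l => (⟨a :: l.1, l.2⟩ : {l : List α // ∀ b, l.count b = n b}))
        fun _ _ h => Subtype.ext (cons_injective (Subtype.ext_iff.mp h))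
    rw [Nat.card_congr (subtypeEquivSigmaCons hnil), Nat.card_sigma, Finset.sum_mul,
      Finset.sum_congr rfl fun a _ => hcons a, ← Finset.sum_mul, hN, Nat.factorial_succ]

theorem card_count_eq_multinomial [Fintype α] (n : α → ℕ) :
    Nat.card {l : List α // ∀ a, l.count a = n a} = Nat.multinomial univ n :=
  Nat.eq_of_mul_eq_mul_left (Finset.prod_pos fun a _ => Nat.factorial_pos (n a)) <| by
    rw [Nat.multinomial_spec, mul_comm, card_count_eq_mul_prod_factorial]

end

def unruns (p : List (α × ℕ)) : List α := p.flatMap fun x => replicate x.2 x.1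

@[simp] theorem unruns_nil : unruns ([] : List (α × ℕ)) = [] := rfl

@[simp] theorem unruns_cons (x : α × ℕ) (p : List (α × ℕ)) :
    unruns (x :: p) = replicate x.2 x.1 ++ unruns p := rfl

def IsRunList (p : List (α × ℕ)) : Prop :=
  (∀ x ∈ p, 0 < x.2) ∧ (p.map Prod.fst).IsChain (· ≠ ·)

variable [DecidableEq α]

def consRun (a : α) : List (α × ℕ) → List (α × ℕ)
  | [] => [(a, 1)]
  | (b, m) :: t => if a = b then (b, m + 1) :: t else (a, 1) :: (b, m) :: t

def runs (l : List α) : List (α × ℕ) := l.foldr consRun []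

theorem unruns_consRun (a : α) (p : List (α × ℕ)) : unruns (consRun a p) = a :: unruns p := by
  rcases p with _ | ⟨⟨b, m⟩, t⟩
  · rfl
  · by_cases h : a = b
    · subst h; simp [consRun, replicate_succ]
    · simp [consRun, h]

@[simp] theorem unruns_runs (l : List α) : unruns (runs l) = l := by
  induction l with
  | nil => rfl
  | cons a l ih => rw [runs, foldr_cons, ← runs, unruns_consRun, ih]

theorem IsRunList.consRun {p : List (α × ℕ)} (hp : IsRunList p) (a : α) :
    IsRunList (consRun a p) := by
  rcases p with _ | ⟨⟨b, m⟩, t⟩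
  · simp [List.consRun, IsRunList]
  · by_cases h : a = b
    · subst h
      simp only [List.consRun, IsRunList] at hp ⊢
      simp at hp ⊢
      exact ⟨hp.1.2, hp.2⟩
    · simpa [List.consRun, IsRunList, isChain_cons, h] using hp

theorem isRunList_runs (l : List α) : IsRunList (runs l) := by
  induction l with
  | nil => simp [runs, IsRunList]
  | cons a l ih => exact ih.consRun a

theorem foldr_consRun_replicate {a : α} {m : ℕ} (hm : 0 < m) {p : List (α × ℕ)}
    (hp : ∀ b ∈ (p.map Prod.fst).head?, b ≠ a) :
    (replicate m a).foldr consRun p = (a, m) :: p := by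
  induction m, hm using Nat.le_induction with
  | base => rcases p with _ | ⟨⟨b, j⟩, t⟩ <;> simp_all [consRun, eq_comm]
  | succ m _ ih => simp [replicate_succ, ih, consRun]

theorem IsRunList.runs_unruns {p : List (α × ℕ)} (hp : IsRunList p) : runs (unruns p) = p := by
  induction p with
  | nil => rfl
  | cons x p ih =>
    obtain ⟨hpos, hchain⟩ := hp
    rw [unruns_cons, runs, foldr_append, ← runs, ih ⟨fun y hy => hpos y (mem_cons_of_mem x hy),
      (isChain_cons.mp hchain).2⟩, foldr_consRun_replicate (hpos x mem_cons_self)]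
    rcases p with _ | ⟨y, p⟩
    · simp
    · simpa [eq_comm] using (isChain_cons_cons.mp hchain).1

def runLengths (p : List (α × ℕ)) (a : α) : List ℕ := (p.filter (·.1 = a)).map Prod.snd

/-- `fillRuns d f` pairs the `j`-th occurrence of each letter `a` in `d` with the `j`-th entry
of `f a`. -/
def fillRuns : List α → (α → List ℕ) → List (α × ℕ)
  | [], _ => []
  | a :: d, f => (a, (f a).headI) :: fillRuns d (Function.update f a (f a).tail)

@[simp] theorem runLengths_nil (a : α) : runLengths [] a = [] := rfl

theorem runLengths_cons (x : α × ℕ) (p : List (α × ℕ)) (a : α) :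
    runLengths (x :: p) a = if x.1 = a then x.2 :: runLengths p a else runLengths p a := by
  by_cases h : x.1 = a <;> simp [runLengths, h]

theorem mem_runLengths {p : List (α × ℕ)} {a : α} {m : ℕ} :
    m ∈ runLengths p a ↔ (a, m) ∈ p := by
  simp [runLengths, and_comm]

theorem length_runLengths (p : List (α × ℕ)) (a : α) :
    (runLengths p a).length = (p.map Prod.fst).count a := by
  induction p with
  | nil => rfl
  | cons x p ih => by_cases h : x.1 = a <;> simp [runLengths_cons, h, ih]

theorem count_unruns (p : List (α × ℕ)) (a : α) :
    (unruns p).count a = (runLengths p a).sum := by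
  induction p with
  | nil => rfl
  | cons x p ih => by_cases h : x.1 = a <;> simp [runLengths_cons, count_replicate, h, ih]

@[simp] theorem map_fst_fillRuns (d : List α) (f : α → List ℕ) :
    (fillRuns d f).map Prod.fst = d := by
  induction d generalizing f with
  | nil => rfl
  | cons a d ih => simp [fillRuns, ih]

theorem runLengths_fillRuns {d : List α} {f : α → List ℕ}
    (hf : ∀ a, (f a).length = d.count a) :
    runLengths (fillRuns d f) = f := by
  induction d generalizing f with
  | nil => funext a; simpa [fillRuns, eq_comm] using hf a
  | cons b d ih =>
    obtain ⟨m, t, hfb⟩ := exists_cons_of_length_eq_add_one ((hf b).trans (count_cons_self ..))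
    have hf' : ∀ a, (Function.update f b t a).length = d.count a := fun a => by
      by_cases hab : a = b
      · subst hab; simpa [hfb] using hf a
      · simpa [hab, count_cons_of_ne (Ne.symm hab)] using hf a
    funext a
    rw [fillRuns, hfb, headI_cons, tail_cons, runLengths_cons, ih hf']
    by_cases hab : a = b
    · subst hab; simp [hfb]
    · simp [Ne.symm hab, hab]

theorem fillRuns_runLengths (p : List (α × ℕ)) :
    fillRuns (p.map Prod.fst) (runLengths p) = p := by
  induction p with
  | nil => rfl
  | cons x p ih =>
    have hx : runLengths (x :: p) x.1 = x.2 :: runLengths p x.1 := by simp [runLengths_cons]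
    have hupd : Function.update (runLengths (x :: p)) x.1 (runLengths p x.1) = runLengths p := by
      funext a
      by_cases h : a = x.1
      · subst h; simp
      · simp [runLengths_cons, h, Ne.symm h]
    rw [map_cons, fillRuns, hx, headI_cons, tail_cons, hupd, ih]

theorem isRunList_fillRuns {d : List α} {f : α → List ℕ} (hd : d.IsChain (· ≠ ·))
    (hf : ∀ a, (f a).length = d.count a) (hpos : ∀ a, ∀ m ∈ f a, 0 < m) :
    IsRunList (fillRuns d f) :=
  ⟨fun x hx => hpos x.1 x.2 (runLengths_fillRuns hf ▸ mem_runLengths.mpr hx),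
    by simpa using hd⟩

def runCount (l : List α) (a : α) : ℕ := ((runs l).map Prod.fst).count a

def runDecomposition (n r : α → ℕ) :
    {l : List α // (∀ a, l.count a = n a) ∧ runCount l = r} ≃
      {d : List α // (∀ a, d.count a = r a) ∧ d.IsChain (· ≠ ·)} ×
        ∀ a, {c : Composition (n a) // c.length = r a} where
  toFun l := (⟨(runs l.1).map Prod.fst, fun a => congrFun l.2.2 a, (isRunList_runs l.1).2⟩,
    fun a => ⟨⟨runLengths (runs l.1) a,
      fun hm => (isRunList_runs l.1).1 _ (mem_runLengths.mp hm),
      by rw [← count_unruns, unruns_runs, l.2.1]⟩,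
      (length_runLengths _ a).trans (congrFun l.2.2 a)⟩)
  invFun x :=
    have hf a : (x.2 a).1.blocks.length = x.1.1.count a := (x.2 a).2.trans (x.1.2.1 a).symm
    ⟨unruns (fillRuns x.1.1 fun a => (x.2 a).1.blocks),
      fun a => by rw [count_unruns, runLengths_fillRuns hf, Composition.blocks_sum],
      funext fun a => by
        rw [runCount, (isRunList_fillRuns x.1.2.2 hf fun a _ => (x.2 a).1.blocks_pos).runs_unruns,
          map_fst_fillRuns, x.1.2.1]⟩
  left_inv l := Subtype.ext (by simp [fillRuns_runLengths])
  right_inv x := by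
    have hf a : (x.2 a).1.blocks.length = x.1.1.count a := (x.2 a).2.trans (x.1.2.1 a).symm
    have hruns := (isRunList_fillRuns x.1.2.2 hf fun a _ => (x.2 a).1.blocks_pos).runs_unruns
    ext
    · simp [hruns]
    · simp [hruns, runLengths_fillRuns hf]

theorem card_count_eq_sum_card_isChain [Fintype α] (n : α → ℕ) (hn : ∀ a, 0 < n a) :
    Nat.card {l : List α // ∀ a, l.count a = n a} =
      ∑ r ∈ Fintype.piFinset fun a => Icc 1 (n a),
        Nat.card {d : List α // (∀ a, d.count a = r a) ∧ d.IsChain (· ≠ ·)} *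
          ∏ a, (n a - 1).choose (r a - 1) := by
  let W := {l : List α // ∀ a, l.count a = n a}
  have hfiber r : {w : W // w.1.runCount = r} ≃ _ :=
    (Equiv.subtypeSubtypeEquivSubtypeInter _ _).trans (runDecomposition n r)
  have hmem (w : W) : w.1.runCount ∈ Fintype.piFinset fun a => Icc 1 (n a) := by
    have hc := ((hfiber _) ⟨w, rfl⟩).2
    refine Fintype.mem_piFinset.mpr fun a => mem_Icc.mpr ⟨?_, ?_⟩
    · exact (hc a).2 ▸ (hc a).1.length_pos_of_pos (hn a)
    · exact (hc a).2 ▸ (hc a).1.length_le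
  rw [← Nat.card_congr (Equiv.sigmaSubtypeFiberEquiv (fun w : W => w.1.runCount) _ hmem),
    Nat.card_sigma, ← Finset.sum_coe_sort (Fintype.piFinset fun a => Icc 1 (n a))]
  refine Fintype.sum_congr _ _ fun r => ?_
  rw [Nat.card_congr (hfiber r), Nat.card_prod, Nat.card_pi]
  have hr a := mem_Icc.mp (Fintype.mem_piFinset.mp r.2 a)
  simp only [Composition.card_length_eq (hn _) (hr _).1]

end List

theorem List.Vector.card_subtype_toList {α : Type*} {N : ℕ} {P : List α → Prop}
    (h : ∀ l, P l → l.length = N) :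
    Nat.card {w : List.Vector α N // P w.toList} = Nat.card {l // P l} :=
  Nat.card_congr (Equiv.subtypeSubtypeEquivSubtype (p := fun l : List α => l.length = N) (h _))

theorem stmt_11_general (k : ℕ) (n : Fin k → ℕ) (hn : ∀ i, 0 < n i) :
    ∑ r ∈ Fintype.piFinset fun i => Finset.Icc 1 (n i),
        F r * ∏ i, (n i - 1).choose (r i - 1) =
      Nat.multinomial Finset.univ n := by
  rw [← List.card_count_eq_multinomial, List.card_count_eq_sum_card_isChain n hn]
  refine sum_congr rfl fun r _ => ?_
  rw [F, ← Nat.card_eq_fintype_card]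
  congr 1
  exact List.Vector.card_subtype_toList
    (P := fun l => (∀ i, l.count i = r i) ∧ l.IsChain (· ≠ ·))
    fun _ h => List.length_eq_sum_of_count_eq h.1

/-- For a `k`-letter system with `n i ≥ 1` elements of letter `i`, decomposing each
arrangement of the multiset into runs gives
`∑_{r_1=1}^{n_1} ⋯ ∑_{r_k=1}^{n_k} F(r) ∏_i C(n_i - 1, r_i - 1) = n! / (n_1! ⋯ n_k!)`. -/
theorem stmt_11 (k : ℕ) (hk : 0 < k) (n : Fin k → ℕ) (hn : ∀ i, 0 < n i) :
    ∑ r ∈ Fintype.piFinset fun i => Finset.Icc 1 (n i),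
        F r * ∏ i, (n i - 1).choose (r i - 1) =
      Nat.multinomial Finset.univ n :=
  stmt_11_general k n hn
end
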